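/- Let H ∈ 𝔽₂^{m×n} be a parity-check matrix of a binary linear code C such that every row of H has Hamming weight exactly 2. Then d(C) = w_AWGNC^min(H) = w_BSC^min(H) = w_maxfrac^min(H). -/
import Mathlib


open Matrix BigOperators Finset

section Defs

variable {J I : Type*} [Fintype J] [Fintype I] [DecidableEq I]

/-- The support of row `j` of a binary matrix `H`. -/
def rowSupp (H : Matrix J I (ZMod 2)) (j : J) : Finset I :=
  Finset.univ.filter fun i => H j i = 1

/-- The fundamental cone of a binary matrix `H`. -/
def fundCone (H : Matrix J I (ZMod 2)) : Set (I → ℝ) :=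
  {x | (∀ i, 0 ≤ x i) ∧
    ∀ j : J, ∀ ℓ ∈ rowSupp H j, x ℓ ≤ ∑ i ∈ (rowSupp H j).erase ℓ, x i}

/-- BEC pseudoweight: size of the support. -/
noncomputable def wBEC (x : I → ℝ) : ℝ := ({i | x i ≠ 0}.ncard : ℝ)

/-- AWGNC pseudoweight. -/
noncomputable def wAWGNC (x : I → ℝ) : ℝ := (∑ i, x i) ^ 2 / ∑ i, x i ^ 2

/-- Max-fractional weight. -/
noncomputable def wMaxFrac (x : I → ℝ) : ℝ := (∑ i, x i) / sSup (Set.range x)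

/-- `H` is a parity-check matrix of the code `C`. -/
def IsParityCheck (H : Matrix J I (ZMod 2)) (C : Submodule (ZMod 2) (I → ZMod 2)) : Prop :=
  ∀ c, c ∈ C ↔ H.mulVec c = 0

/-- Minimum Hamming distance of a code. -/
noncomputable def minDist (C : Submodule (ZMod 2) (I → ZMod 2)) : ℕ :=
  sInf {d | ∃ c ∈ C, c ≠ 0 ∧ hammingNorm c = d}

/-- Minimum pseudoweight of `H` w.r.t. pseudoweight function `w`:
the infimum of `w` over all nonzero pseudocodewords (`⊤` if there are none). -/
noncomputable def minPW (w : (I → ℝ) → ℝ) (H : Matrix J I (ZMod 2)) : EReal :=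
  sInf ((fun x => (w x : EReal)) '' (fundCone H \ {0}))

/-- The chain (connectivity) relation associated with a binary matrix whose rows
have weight 2: `i` and `i'` are related iff they are equal or joined by a chain of rows
whose supports are exactly consecutive pairs. -/
def chainRel (H : Matrix J I (ZMod 2)) (i i' : I) : Prop :=
  i = i' ∨ ∃ ℓ : ℕ, 1 ≤ ℓ ∧ ∃ (c : Fin (ℓ + 1) → I) (r : Fin ℓ → J),
    c 0 = i ∧ c (Fin.last ℓ) = i' ∧
    ∀ t : Fin ℓ, rowSupp H (r t) = {c t.castSucc, c t.succ}

/-- The 0-1 real matrix associated with a binary matrix. -/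
def toRealMatrix (H : Matrix J I (ZMod 2)) : Matrix J I ℝ :=
  Matrix.of fun j i => if H j i = 1 then (1 : ℝ) else 0

/-- The Tanner graph of a binary matrix. -/
def tannerGraph (H : Matrix J I (ZMod 2)) : SimpleGraph (J ⊕ I) :=
  SimpleGraph.fromRel fun u v => ∃ j i, u = Sum.inl j ∧ v = Sum.inr i ∧ H j i = 1

end Defs

/-- The multiset of (real) eigenvalues, with multiplicity, of a real square matrix:
the real roots of its characteristic polynomial. -/
noncomputable def eigMult {ι : Type*} [Fintype ι] [DecidableEq ι] (A : Matrix ι ι ℝ) :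
    Multiset ℝ :=
  A.charpoly.roots

section FinDefs

variable {n : ℕ}

/-- The non-increasing rearrangement of a real vector. -/
noncomputable def sortDesc (x : Fin n → ℝ) : Fin n → ℝ :=
  fun i => x (Tuple.sort (fun j => -x j) i)

/-- `Φ(ξ) = ∫₀^ξ φ`, where `φ(ξ) = x'_i` for `i - 1 < ξ ≤ i` and `x'` is the
non-increasing rearrangement of `x`. -/
noncomputable def bigPhi (x : Fin n → ℝ) (ξ : ℝ) : ℝ :=
  ∑ i : Fin n, sortDesc x i * min 1 (max 0 (ξ - (i : ℝ)))

/-- BSC pseudoweight: `2 Φ⁻¹(Φ(n)/2)`. -/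
noncomputable def wBSC (x : Fin n → ℝ) : ℝ :=
  2 * sInf {ξ : ℝ | bigPhi x (n : ℝ) / 2 ≤ bigPhi x ξ}

/-- The pseudocodeword redundancy of a code `C` w.r.t. the pseudoweight function `w`:
the smallest number of rows of a parity-check matrix `H` of `C` whose minimum
pseudoweight equals the minimum distance of `C` (`⊤` if there is no such matrix). -/
noncomputable def pcRedundancy (w : (Fin n → ℝ) → ℝ)
    (C : Submodule (ZMod 2) (Fin n → ZMod 2)) : ℕ∞ :=
  sInf {k : ℕ∞ | ∃ (m : ℕ) (H : Matrix (Fin m) (Fin n) (ZMod 2)),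
    k = (m : ℕ∞) ∧ IsParityCheck H C ∧ minPW w H = ((minDist C : ℝ) : EReal)}

end FinDefs


/-! ### Auxiliary lemmas -/

lemma zmod2_cases' : ∀ a : ZMod 2, a = 0 ∨ a = 1 := by decide

lemma zmod2_add_self' (a : ZMod 2) : a + a = 0 := by revert a; decide

lemma zmod2_add_eq_zero' : ∀ a b : ZMod 2, a + b = 0 → a = b := by decide

lemma stair' (n : ℕ) (ξ : ℝ) :
    ∑ i : Fin n, min 1 (max 0 (ξ - (i : ℝ))) = min (max 0 ξ) (n : ℝ) := by
  induction n with
  | zero =>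
    simp only [Finset.univ_eq_empty, Finset.sum_empty, Nat.cast_zero]
    rcases le_total ξ 0 with h | h
    · rw [max_eq_left h, min_self]
    · rw [max_eq_right h, min_eq_right h]
  | succ n ih =>
    rw [Fin.sum_univ_castSucc]
    simp only [Fin.coe_castSucc, Fin.val_last] at *
    rw [ih]
    push_cast
    have hn : (0:ℝ) ≤ n := Nat.cast_nonneg n
    simp only [min_def, max_def]
    split_ifs <;> linarith

section SortFacts
variable {n : ℕ} (x : Fin n → ℝ)

lemma sum_sortDesc' : ∑ i, sortDesc x i = ∑ i, x i :=
  Equiv.sum_comp (Tuple.sort (fun j => -x j)) x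

lemma sortDesc_mem' (i : Fin n) : ∃ i', sortDesc x i = x i' := ⟨_, rfl⟩

lemma sortDesc_antitone' : Antitone (sortDesc x) := by
  intro a b hab
  have := Tuple.monotone_sort (fun j => -x j) hab
  simpa [sortDesc] using this

lemma clamp_nonneg' (t : ℝ) : 0 ≤ min 1 (max 0 t) := le_min zero_le_one (le_max_left _ _)

lemma bigPhi_nat' : bigPhi x n = ∑ i, x i := by
  rw [← sum_sortDesc' x]
  unfold bigPhi
  refine Finset.sum_congr rfl fun i _ => ?_
  have h1 : (1:ℝ) ≤ (n:ℝ) - (i:ℝ) := by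
    have := i.isLt
    have : (i:ℝ) + 1 ≤ (n:ℝ) := by exact_mod_cast this
    linarith
  rw [max_eq_right (by linarith), min_eq_left h1, mul_one]

lemma bigPhi_le' (M ξ : ℝ) (hM : 0 ≤ M) (hxM : ∀ i, x i ≤ M) (hξ : 0 ≤ ξ) :
    bigPhi x ξ ≤ M * ξ := by
  have h1 : bigPhi x ξ ≤ ∑ i : Fin n, M * min 1 (max 0 (ξ - (i:ℝ))) := by
    refine Finset.sum_le_sum fun i _ => ?_
    obtain ⟨i', hi'⟩ := sortDesc_mem' x i
    exact mul_le_mul_of_nonneg_right (hi' ▸ hxM i') (clamp_nonneg' _)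
  rw [← Finset.mul_sum, stair'] at h1
  refine h1.trans (mul_le_mul_of_nonneg_left ?_ hM)
  rw [max_eq_right hξ]
  exact min_le_left _ _

lemma bigPhi_nonpos' (ξ : ℝ) (hξ : ξ ≤ 0) : bigPhi x ξ = 0 := by
  unfold bigPhi
  refine Finset.sum_eq_zero fun i _ => ?_
  have : max 0 (ξ - (i:ℝ)) = 0 :=
    max_eq_left (by have : (0:ℝ) ≤ i := Nat.cast_nonneg _; linarith)
  rw [this, min_eq_right zero_le_one, mul_zero]

lemma bsc_set_lb (M : ℝ) (hM : 0 < M) (hxM : ∀ i, x i ≤ M)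
    (hT : 0 < ∑ i, x i) :
    ∀ ξ ∈ {ξ : ℝ | bigPhi x (n : ℝ) / 2 ≤ bigPhi x ξ}, (∑ i, x i) / (2 * M) ≤ ξ := by
  intro ξ hξ
  simp only [Set.mem_setOf_eq, bigPhi_nat' x] at hξ
  rcases le_total ξ 0 with h | h
  · rw [bigPhi_nonpos' x ξ h] at hξ; linarith
  · have := hξ.trans (bigPhi_le' x M ξ hM.le hxM h)
    rw [div_le_iff₀ (by positivity)]
    linarith

lemma wBSC_ge' (M : ℝ) (hM : 0 < M) (hxM : ∀ i, x i ≤ M)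
    (hT : 0 < ∑ i, x i) : (∑ i, x i) / M ≤ wBSC x := by
  have hmem : (n:ℝ) ∈ {ξ : ℝ | bigPhi x (n : ℝ) / 2 ≤ bigPhi x ξ} := by
    simp only [Set.mem_setOf_eq, bigPhi_nat' x]; linarith
  have h1 : (∑ i, x i) / (2*M) ≤ sInf {ξ : ℝ | bigPhi x (n : ℝ) / 2 ≤ bigPhi x ξ} :=
    le_csInf ⟨_, hmem⟩ (bsc_set_lb x M hM hxM hT)
  rw [div_le_iff₀ (by positivity : (0:ℝ) < 2*M)] at h1
  unfold wBSC
  rw [div_le_iff₀ hM]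
  nlinarith [h1]

lemma sortDesc_indicator' {d : ℕ} (hvals : ∀ i, x i = 0 ∨ x i = 1)
    (hsum : ∑ i, x i = d) (k : Fin n) (hk : k.val < d) : sortDesc x k = 1 := by
  have hvals' : ∀ i, sortDesc x i = 0 ∨ sortDesc x i = 1 := by
    intro i; obtain ⟨i', hi'⟩ := sortDesc_mem' x i; rw [hi']; exact hvals i'
  rcases hvals' k with h0 | h1
  · exfalso
    have hle : ∀ i : Fin n, sortDesc x i ≤ if i < k then (1:ℝ) else 0 := by
      intro i
      split_ifs with h
      · rcases hvals' i with h' | h' <;> rw [h'] <;> norm_num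
      · rw [← h0]
        exact sortDesc_antitone' x (le_of_not_gt h)
    have hcard : ∑ i : Fin n, (if i < k then (1:ℝ) else 0) = k.val := by
      rw [Finset.sum_ite, Finset.sum_const, Finset.sum_const]
      have : Finset.univ.filter (fun i : Fin n => i < k) = Finset.Iio k := by
        ext i; simp
      simp [this, Fin.card_Iio]
    have : (d:ℝ) ≤ k.val := by
      rw [← hsum, ← sum_sortDesc' x, ← hcard]
      exact Finset.sum_le_sum fun i _ => hle i
    exact absurd (by exact_mod_cast this) (not_le.mpr hk)
  · exact h1

lemma bigPhi_indicator' {d : ℕ} (hvals : ∀ i, x i = 0 ∨ x i = 1)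
    (hsum : ∑ i, x i = d) (hdn : d ≤ n) (hd : 1 ≤ d) :
    bigPhi x ((d:ℝ)/2) = (d:ℝ)/2 := by
  unfold bigPhi
  have key : ∀ i : Fin n, sortDesc x i * min 1 (max 0 ((d:ℝ)/2 - (i : ℝ))) =
      min 1 (max 0 ((d:ℝ)/2 - (i : ℝ))) := by
    intro i
    rcases lt_or_ge i.val d with h | h
    · rw [sortDesc_indicator' x hvals hsum i h, one_mul]
    · have hi : (d:ℝ) ≤ (i:ℝ) := by exact_mod_cast h
      have hd' : (0:ℝ) < d := by exact_mod_cast hd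
      have : max 0 ((d:ℝ)/2 - (i : ℝ)) = 0 := max_eq_left (by linarith)
      rw [this, min_eq_right zero_le_one, mul_zero]
  rw [Finset.sum_congr rfl fun i _ => key i, stair']
  have hd' : (0:ℝ) ≤ (d:ℝ)/2 := by positivity
  rw [max_eq_right hd', min_eq_left]
  have : (d:ℝ) ≤ n := by exact_mod_cast hdn
  linarith

end SortFacts

/-- If `H` is a parity-check matrix of the binary linear code `C` (of positive
length) all of whose rows have Hamming weight exactly 2, then
`d(C) = w_AWGNC^min(H) = w_BSC^min(H) = w_maxfrac^min(H)`. -/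
theorem statement5 {m n : ℕ} (hn : 0 < n) (C : Submodule (ZMod 2) (Fin n → ZMod 2))
    (H : Matrix (Fin m) (Fin n) (ZMod 2)) (hH : IsParityCheck H C)
    (hrows : ∀ j, (rowSupp H j).card = 2) :
    ((minDist C : ℝ) : EReal) = minPW wAWGNC H ∧
    ((minDist C : ℝ) : EReal) = minPW wBSC H ∧
    ((minDist C : ℝ) : EReal) = minPW wMaxFrac H := by
  classical
  set r : Fin n → Fin n → Prop :=
    fun a b => ∃ j, a ∈ rowSupp H j ∧ b ∈ rowSupp H j with hr
  set R : Fin n → Fin n → Prop := Relation.EqvGen r with hR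
  have pair : ∀ j, ∃ a b, a ≠ b ∧ rowSupp H j = {a, b} :=
    fun j => Finset.card_eq_two.mp (hrows j)
  -- mulVec restricted to the row support
  have hmul : ∀ (c : Fin n → ZMod 2) (j), H.mulVec c j = ∑ i ∈ rowSupp H j, c i := by
    intro c j
    unfold Matrix.mulVec dotProduct rowSupp
    rw [Finset.sum_filter]
    refine Finset.sum_congr rfl fun i _ => ?_
    rcases zmod2_cases' (H j i) with h | h <;> simp [h]
  -- x constant on pairs
  have cone_pair : ∀ x ∈ fundCone H, ∀ j (a b : Fin n), a ≠ b → rowSupp H j = {a, b} →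
      x a = x b := by
    intro x hx j a b hne hs
    have he1 : ({a, b} : Finset (Fin n)).erase a = {b} :=
      Finset.erase_insert (Finset.notMem_singleton.mpr hne)
    have he2 : ({a, b} : Finset (Fin n)).erase b = {a} := by
      rw [Finset.pair_comm]
      exact Finset.erase_insert (Finset.notMem_singleton.mpr hne.symm)
    have h1 := hx.2 j a (by rw [hs]; simp)
    have h2 := hx.2 j b (by rw [hs]; simp)
    rw [hs, he1, Finset.sum_singleton] at h1
    rw [hs, he2, Finset.sum_singleton] at h2
    exact le_antisymm h1 h2
  -- x constant on chain components
  have cone_R : ∀ x ∈ fundCone H, ∀ a b, R a b → x a = x b := by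
    intro x hx a b hab
    induction hab with
    | rel a b h =>
      obtain ⟨j, haj, hbj⟩ := h
      obtain ⟨p, q, hpq, hs⟩ := pair j
      have hxpq : x p = x q := cone_pair x hx j p q hpq hs
      rw [hs] at haj hbj
      simp only [Finset.mem_insert, Finset.mem_singleton] at haj hbj
      rcases haj with rfl | rfl <;> rcases hbj with rfl | rfl
      · rfl
      · exact hxpq
      · exact hxpq.symm
      · rfl
    | refl a => rfl
    | symm a b _ ih => exact ih.symm
    | trans a b c _ _ ih1 ih2 => exact ih1.trans ih2
  -- the indicator of each chain component is a codeword
  have comp_cw : ∀ i : Fin n, (fun i' => if R i i' then (1 : ZMod 2) else 0) ∈ C := by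
    intro i
    rw [hH]
    funext j
    rw [hmul]
    obtain ⟨a, b, hne, hs⟩ := pair j
    have hab : R a b := Relation.EqvGen.rel a b ⟨j, by rw [hs]; simp, by rw [hs]; simp⟩
    have hiff : R i a ↔ R i b :=
      ⟨fun h => h.trans _ _ _ hab, fun h => h.trans _ _ _ (hab.symm _ _)⟩
    rw [hs, Finset.sum_pair hne, if_congr hiff rfl rfl]
    simp [zmod2_add_self']
  have i0 : Fin n := ⟨0, hn⟩
  have hc_ne : ∀ i : Fin n, (fun i' => if R i i' then (1 : ZMod 2) else 0) ≠ 0 := by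
    intro i h0
    have h1 : R i i := Relation.EqvGen.refl i
    simpa [h1] using congrFun h0 i
  -- the minimum distance is attained
  have dmem : minDist C ∈ {d | ∃ c ∈ C, c ≠ 0 ∧ hammingNorm c = d} := by
    apply Nat.sInf_mem
    exact ⟨_, _, comp_cw i0, hc_ne i0, rfl⟩
  obtain ⟨c0, hc0C, hc0ne, hc0norm⟩ := dmem
  set d := minDist C with hd
  have hd1 : 1 ≤ d := by
    rw [← hc0norm]
    exact hammingNorm_pos_iff.mpr hc0ne
  have hdn : d ≤ n := by
    rw [← hc0norm]
    exact (Finset.card_filter_le _ _).trans_eq (Fintype.card_fin n)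
  have hdR : (0:ℝ) < d := by exact_mod_cast hd1
  -- key lower bound for cone vectors
  have key : ∀ x ∈ fundCone H, ∀ i : Fin n, (d : ℝ) * x i ≤ ∑ i', x i' := by
    intro x hx i
    set c : Fin n → ZMod 2 := fun i' => if R i i' then 1 else 0 with hc
    set F : Finset (Fin n) := Finset.univ.filter fun i' => R i i' with hF
    have hnorm : hammingNorm c = F.card := by
      unfold hammingNorm
      congr 1
      ext i'
      simp [hc, hF]
    have hdF : d ≤ F.card := Nat.sInf_le ⟨c, comp_cw i, hc_ne i, hnorm⟩
    have h1 : ∑ i' ∈ F, x i' ≤ ∑ i', x i' :=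
      Finset.sum_le_sum_of_subset_of_nonneg (Finset.subset_univ F) fun i' _ _ => hx.1 i'
    have h2 : ∑ i' ∈ F, x i' = F.card * x i := by
      rw [Finset.sum_congr rfl fun i' hi' =>
        (cone_R x hx i i' (Finset.mem_filter.mp hi').2).symm]
      rw [Finset.sum_const, nsmul_eq_mul]
    have h3 : (d : ℝ) * x i ≤ F.card * x i :=
      mul_le_mul_of_nonneg_right (by exact_mod_cast hdF) (hx.1 i)
    linarith
  -- structure of nonzero cone vectors
  have struct : ∀ x ∈ fundCone H \ {0}, ∃ M : ℝ, 0 < M ∧ (∀ i, x i ≤ M) ∧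
      sSup (Set.range x) = M ∧ (d : ℝ) * M ≤ ∑ i, x i ∧ 0 < ∑ i, x i := by
    rintro x ⟨hx, hx0⟩
    haveI : Nonempty (Fin n) := ⟨i0⟩
    obtain ⟨is, his⟩ := Finite.exists_max x
    set M := x is with hM
    have hMpos : 0 < M := by
      rcases lt_or_ge 0 M with h | h
      · exact h
      · exfalso
        apply hx0
        funext i
        exact le_antisymm ((his i).trans h) (hx.1 i)
    have hsup : sSup (Set.range x) = M :=
      le_antisymm (csSup_le (Set.range_nonempty x) (by rintro y ⟨i, rfl⟩; exact his i))
        (le_csSup (Set.Finite.bddAbove (Set.finite_range x)) ⟨is, rfl⟩)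
    refine ⟨M, hMpos, his, hsup, key x hx is, ?_⟩
    calc (0:ℝ) < (d:ℝ) * M := by positivity
    _ ≤ ∑ i, x i := key x hx is
  -- pointwise lower bounds
  have lbMF : ∀ x ∈ fundCone H \ {0}, (d : ℝ) ≤ wMaxFrac x := by
    intro x hx
    obtain ⟨M, hMpos, hxM, hsup, hkey, hT⟩ := struct x hx
    unfold wMaxFrac
    rw [hsup, le_div_iff₀ hMpos]
    linarith
  have lbAW : ∀ x ∈ fundCone H \ {0}, (d : ℝ) ≤ wAWGNC x := by
    intro x hx
    obtain ⟨M, hMpos, hxM, hsup, hkey, hT⟩ := struct x hx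
    have hx1 := hx.1.1
    have hQle : ∑ i, x i ^ 2 ≤ M * ∑ i, x i := by
      rw [Finset.mul_sum]
      exact Finset.sum_le_sum fun i _ => by
        rw [sq]
        exact mul_le_mul_of_nonneg_right (hxM i) (hx1 i)
    have hQpos : 0 < ∑ i, x i ^ 2 := by
      rcases (Finset.sum_nonneg fun i _ => sq_nonneg (x i)).lt_or_eq with h | h
      · exact h
      · exfalso
        apply hx.2
        funext i
        have := (Finset.sum_eq_zero_iff_of_nonneg fun i _ => sq_nonneg (x i)).mp h.symm
          i (Finset.mem_univ i)
        exact pow_eq_zero_iff two_ne_zero |>.mp this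
    unfold wAWGNC
    rw [le_div_iff₀ hQpos]
    nlinarith [hkey, hQle, hT, hMpos.le, hdR.le]
  have lbBSC : ∀ x ∈ fundCone H \ {0}, (d : ℝ) ≤ wBSC x := by
    intro x hx
    obtain ⟨M, hMpos, hxM, hsup, hkey, hT⟩ := struct x hx
    have h1 : (∑ i, x i) / M ≤ wBSC x := wBSC_ge' x M hMpos hxM hT
    have h2 : (d:ℝ) ≤ (∑ i, x i) / M := by
      rw [le_div_iff₀ hMpos]; linarith
    linarith
  -- the minimizing pseudocodeword
  set x0 : Fin n → ℝ := fun i => if c0 i ≠ 0 then 1 else 0 with hx0def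
  have hx0vals : ∀ i, x0 i = 0 ∨ x0 i = 1 := by
    intro i; by_cases h : c0 i ≠ 0 <;> simp [hx0def, h]
  have hx0nonneg : ∀ i, 0 ≤ x0 i := by
    intro i; rcases hx0vals i with h | h <;> rw [h] <;> norm_num
  have hx0sum : ∑ i, x0 i = d := by
    rw [hx0def, Finset.sum_boole, ← hc0norm]
    rfl
  have hx0sq : ∑ i, x0 i ^ 2 = d := by
    rw [← hx0sum]
    exact Finset.sum_congr rfl fun i _ => by
      rcases hx0vals i with h | h <;> rw [h] <;> norm_num
  have hc0row : ∀ j (a b : Fin n), a ≠ b → rowSupp H j = {a, b} → c0 a = c0 b := by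
    intro j a b hne hs
    have := congrFun ((hH c0).mp hc0C) j
    rw [hmul, hs, Finset.sum_pair hne] at this
    exact zmod2_add_eq_zero' _ _ (by simpa using this)
  have hx0cone : x0 ∈ fundCone H := by
    refine ⟨hx0nonneg, fun j ℓ hℓ => ?_⟩
    obtain ⟨a, b, hne, hs⟩ := pair j
    have hab : x0 a = x0 b := by
      have := hc0row j a b hne hs
      simp only [hx0def, this]
    have he1 : ({a, b} : Finset (Fin n)).erase a = {b} :=
      Finset.erase_insert (Finset.notMem_singleton.mpr hne)
    have he2 : ({a, b} : Finset (Fin n)).erase b = {a} := by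
      rw [Finset.pair_comm]
      exact Finset.erase_insert (Finset.notMem_singleton.mpr hne.symm)
    rw [hs] at hℓ ⊢
    simp only [Finset.mem_insert, Finset.mem_singleton] at hℓ
    rcases hℓ with rfl | rfl
    · rw [he1, Finset.sum_singleton, ← hab]
    · rw [he2, Finset.sum_singleton, hab]
  have hx0ne : x0 ≠ 0 := by
    obtain ⟨i, hi⟩ := Function.ne_iff.mp hc0ne
    intro h0
    have := congrFun h0 i
    simp only [hx0def, Pi.zero_apply] at this
    rw [if_pos (by simpa using hi)] at this
    norm_num at this
  have hx0mem : x0 ∈ fundCone H \ {0} := ⟨hx0cone, hx0ne⟩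
  -- weights of x0
  have hAW : wAWGNC x0 = d := by
    unfold wAWGNC
    rw [hx0sum, hx0sq, sq, mul_div_assoc, div_self hdR.ne', mul_one]
  have hsup1 : sSup (Set.range x0) = 1 := by
    obtain ⟨i, hi⟩ := Function.ne_iff.mp hc0ne
    have hi' : c0 i ≠ 0 := by simpa using hi
    have h1 : (1:ℝ) ∈ Set.range x0 := ⟨i, by simp [hx0def, hi']⟩
    refine le_antisymm (csSup_le ⟨1, h1⟩ ?_) (le_csSup (Set.Finite.bddAbove
      (Set.finite_range x0)) h1)
    rintro y ⟨i', rfl⟩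
    rcases hx0vals i' with h | h <;> rw [h] <;> norm_num
  have hMF : wMaxFrac x0 = d := by
    unfold wMaxFrac
    rw [hsup1, hx0sum, div_one]
  have hBSC : wBSC x0 = d := by
    have hT : (0:ℝ) < ∑ i, x0 i := by rw [hx0sum]; exact hdR
    have hxM : ∀ i, x0 i ≤ 1 := fun i => by
      rcases hx0vals i with h | h <;> rw [h] <;> norm_num
    have hlb : (d:ℝ) ≤ wBSC x0 := by
      have := wBSC_ge' x0 1 one_pos hxM hT
      rw [div_one, hx0sum] at this
      exact this
    have hub : wBSC x0 ≤ d := by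
      unfold wBSC
      have hmem : (d:ℝ)/2 ∈ {ξ : ℝ | bigPhi x0 (n : ℝ) / 2 ≤ bigPhi x0 ξ} := by
        simp only [Set.mem_setOf_eq]
        rw [bigPhi_nat' x0, hx0sum, bigPhi_indicator' x0 hx0vals hx0sum hdn hd1]
      have hbdd : BddBelow {ξ : ℝ | bigPhi x0 (n : ℝ) / 2 ≤ bigPhi x0 ξ} :=
        ⟨(∑ i, x0 i)/(2*1), fun ξ hξ => bsc_set_lb x0 1 one_pos hxM hT ξ hξ⟩
      have := csInf_le hbdd hmem
      linarith
    linarith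
  -- conclusion
  have final : ∀ w : (Fin n → ℝ) → ℝ, (∀ x ∈ fundCone H \ {0}, (d : ℝ) ≤ w x) →
      w x0 = d → ((d : ℝ) : EReal) = minPW w H := by
    intro w hlb hwx0
    refine le_antisymm (le_sInf ?_) (sInf_le ⟨x0, hx0mem, by simp [hwx0]⟩)
    rintro y ⟨x, hx, rfl⟩
    show ((d:ℝ) : EReal) ≤ ((w x : ℝ) : EReal)
    exact EReal.coe_le_coe_iff.mpr (hlb x hx)
  exact ⟨final wAWGNC lbAW hAW, final wBSC lbBSC hBSC, final wMaxFrac lbMF hMF⟩
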